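/- arXiv:1201.2287 — 2 statements merged into one kernel-verified Lean document; each statement's English description precedes it below -/
import Mathlib

section
/- Let W = V × (a,b) ⊂ ℝᴺ with V open in ℝᴺ⁻¹, and let u : W → ℝ be an upper semicontinuous function satisfying u_t ≤ 0 in the viscosity sense (i.e., for every smooth test function φ such that u − φ has a local maximum at a point (x₀,t₀) ∈ W, one has φ_t(x₀,t₀) ≤ 0). Then for every x ∈ V and a < t₁ < t₂ < b, one has u(x,t₁) ≥ u(x,t₂). -/
open Topology

/-- An upper semicontinuous function on a nonempty compact set attains its maximum. -/
lemma usc_exists_max' {X : Type*} [TopologicalSpace X] {s : Set X} (hs : IsCompact s)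
    (hne : s.Nonempty) {f : X → ℝ} (hf : UpperSemicontinuousOn f s) :
    ∃ p ∈ s, ∀ q ∈ s, f q ≤ f p := by
  by_contra h
  push_neg at h
  -- h : ∀ p ∈ s, ∃ q ∈ s, f p < f q
  choose q hqs hq using h
  set c : ∀ p ∈ s, ℝ := fun p hp => (f p + f (q p hp)) / 2 with hc
  set U : ∀ p ∈ s, Set X := fun p hp => {z | z ∈ s → f z < c p hp} with hUdef
  have hU : ∀ (p : X) (hp : p ∈ s), U p hp ∈ 𝓝 p := by
    intro p hp
    have h1 : f p < c p hp := by
      have := hq p hp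
      simp only [hc]
      linarith
    have h2 := hf p hp (c p hp) h1
    rw [eventually_nhdsWithin_iff] at h2
    exact h2
  obtain ⟨t, hcover⟩ := hs.elim_nhds_subcover' U hU
  have htne : t.Nonempty := by
    obtain ⟨p0, hp0⟩ := hne
    have := hcover hp0
    simp only [Set.mem_iUnion] at this
    obtain ⟨i, hi, _⟩ := this
    exact ⟨i, hi⟩
  obtain ⟨i, hit, hmax⟩ := t.exists_max_image (fun j => f (q j.1 j.2)) htne
  have hQs : q i.1 i.2 ∈ s := hqs i.1 i.2
  have hQcov := hcover hQs
  simp only [Set.mem_iUnion] at hQcov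
  obtain ⟨j, hjt, hjU⟩ := hQcov
  have h3 : f (q i.1 i.2) < c j.1 j.2 := hjU hQs
  have h4 : c j.1 j.2 < f (q j.1 j.2) := by
    have := hq j.1 j.2
    simp only [hc]
    linarith
  have h5 : f (q j.1 j.2) ≤ f (q i.1 i.2) := hmax j hjt
  linarith

/-- Let `W = V × (a,b)` with `V` open, and let `u` be upper semicontinuous on `W` and satisfy
`u_t ≤ 0` in the viscosity sense (for every smooth test function `φ` such that `u − φ` has a
local maximum at a point of `W`, one has `φ_t ≤ 0` there).  Then `u` is non-increasing in time:
`u(x,t₁) ≥ u(x,t₂)` for `x ∈ V`, `a < t₁ < t₂ < b`. -/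
theorem nonincreasing_of_viscosity_ut_nonpos {N : ℕ}
    (V : Set (Fin N → ℝ)) (hV : IsOpen V) (a b : ℝ)
    (u : (Fin N → ℝ) × ℝ → ℝ)
    (husc : UpperSemicontinuousOn u (V ×ˢ Set.Ioo a b))
    (hvisc : ∀ p ∈ V ×ˢ Set.Ioo a b, ∀ φ : (Fin N → ℝ) × ℝ → ℝ, ContDiff ℝ (⊤ : ℕ∞) φ →
      IsLocalMax (fun q => u q - φ q) p → fderiv ℝ φ p (0, 1) ≤ 0) :
    ∀ x ∈ V, ∀ t₁ t₂ : ℝ, a < t₁ → t₁ < t₂ → t₂ < b → u (x, t₂) ≤ u (x, t₁) := by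
  intro x hx t₁ t₂ hat₁ ht₁₂ ht₂b
  have hmain : ∀ ε : ℝ, 0 < ε → u (x, t₂) ≤ u (x, t₁) + ε := by
    intro ε hε
    -- a small radius around x inside V
    obtain ⟨r₀, hr₀, hball⟩ := Metric.isOpen_iff.mp hV x hx
    set r := r₀ / 2 with hrdef
    have hr : 0 < r := by positivity
    have hrV : Metric.closedBall x r ⊆ V :=
      (Metric.closedBall_subset_ball (by rw [hrdef]; linarith)).trans hball
    set T := (t₂ + b) / 2 with hTdef
    have hT1 : t₂ < T := by rw [hTdef]; linarith
    have hT2 : T < b := by rw [hTdef]; linarith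
    set S : Set ((Fin N → ℝ) × ℝ) := V ×ˢ Set.Ioo a b with hSdef
    set D : Set ((Fin N → ℝ) × ℝ) := Metric.closedBall x r ×ˢ Set.Icc t₁ T with hDdef
    have hDcomp : IsCompact D := (isCompact_closedBall x r).prod isCompact_Icc
    have hDS : D ⊆ S := Set.prod_mono hrV
      (fun t ht => ⟨lt_of_lt_of_le hat₁ ht.1, lt_of_le_of_lt ht.2 hT2⟩)
    have hx2D : (x, t₂) ∈ D := ⟨Metric.mem_closedBall_self hr.le, ⟨ht₁₂.le, hT1.le⟩⟩
    have hx1S : (x, t₁) ∈ S := ⟨hx, hat₁, lt_trans ht₁₂ ht₂b⟩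
    -- upper semicontinuity of u at (x, t₁)
    have husc1 := husc (x, t₁) hx1S (u (x, t₁) + ε / 4) (by linarith)
    rw [Filter.eventually_iff] at husc1
    obtain ⟨η, hηpos, hηsub⟩ := Metric.mem_nhdsWithin_iff.mp husc1
    set η' := min η r with hη'def
    have hη' : 0 < η' := lt_min hηpos hr
    have hη'η : η' ≤ η := min_le_left _ _
    have hη'r : η' ≤ r := min_le_right _ _
    -- maximum of u on D
    have hDne : D.Nonempty := ⟨(x, t₂), hx2D⟩
    obtain ⟨pM, hpMD, hpMmax⟩ := usc_exists_max' hDcomp hDne (husc.mono hDS)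
    set B := u pM - u (x, t₂) + ε / 2 with hBdef
    have hB : 0 < B := by
      have := hpMmax (x, t₂) hx2D
      rw [hBdef]; linarith
    have ht₂₁ : (0:ℝ) < t₂ - t₁ := by linarith
    set δ := ε / (4 * (t₂ - t₁)) with hδdef
    have hδpos : 0 < δ := by rw [hδdef]; positivity
    have hδval : δ * (t₂ - t₁) = ε / 4 := by
      rw [hδdef]; field_simp
    set κ := ε / 4 with hκdef
    have hκ : 0 < κ := by rw [hκdef]; positivity
    set lam := Real.log (B / κ + 1) / (T - t₂) + 1 with hlamdef
    have hBκ : (1:ℝ) ≤ B / κ + 1 := by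
      have : 0 ≤ B / κ := le_of_lt (div_pos hB hκ)
      linarith
    have hlam : 0 < lam := by
      rw [hlamdef]
      have h1 : 0 ≤ Real.log (B / κ + 1) := Real.log_nonneg hBκ
      have h2 : 0 < T - t₂ := by linarith
      positivity
    set C := B / η' ^ 2 + 1 with hCdef
    have hC : 0 < C := by
      rw [hCdef]; positivity
    -- the test function
    set φ : (Fin N → ℝ) × ℝ → ℝ := fun q =>
      C * ∑ i, (q.1 i - x i) ^ 2 + δ * (q.2 - t₁) + κ * Real.exp (lam * (q.2 - t₂)) with hφdef
    have hφsmooth : ContDiff ℝ (⊤ : ℕ∞) φ := by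
      rw [hφdef]
      apply ContDiff.add
      apply ContDiff.add
      · apply ContDiff.mul contDiff_const
        apply ContDiff.sum
        intro i _
        exact (((ContinuousLinearMap.proj i :
          (Fin N → ℝ) →L[ℝ] ℝ).contDiff.comp contDiff_fst).sub contDiff_const).pow 2
      · exact contDiff_const.mul (contDiff_snd.sub contDiff_const)
      · exact contDiff_const.mul
          ((contDiff_const.mul (contDiff_snd.sub contDiff_const)).exp)
    -- maximum of u - φ on D
    have hfusc : UpperSemicontinuousOn (fun q => u q - φ q) D := by
      have h1 : UpperSemicontinuousOn (fun q => -φ q) D :=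
        (hφsmooth.continuous.neg.continuousOn).upperSemicontinuousOn
      have h2 := (husc.mono hDS).add h1
      simpa [sub_eq_add_neg] using h2
    obtain ⟨p, hpD, hpmax⟩ := usc_exists_max' hDcomp hDne hfusc
    have hφx2 : φ (x, t₂) = ε / 2 := by
      simp only [hφdef, sub_self, mul_zero, Real.exp_zero]
      simp only [ne_eq, OfNat.ofNat_ne_zero, not_false_eq_true, zero_pow, Finset.sum_const_zero,
        mul_zero, mul_one, zero_add]
      rw [hδval, hκdef]; ring
    have hkey : u (x, t₂) - ε / 2 ≤ u p - φ p := by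
      have h := hpmax (x, t₂) hx2D
      rw [hφx2] at h
      linarith
    have hφB : φ p ≤ B := by
      have h2 := hpMmax p hpD
      rw [hBdef]; linarith
    -- the three pieces of φ p
    have hsq : 0 ≤ ∑ i, (p.1 i - x i) ^ 2 := Finset.sum_nonneg fun i _ => sq_nonneg _
    have hp2 : p.2 ∈ Set.Icc t₁ T := hpD.2
    have hterm2 : 0 ≤ δ * (p.2 - t₁) := mul_nonneg hδpos.le (by linarith [hp2.1])
    have hterm3 : 0 < κ * Real.exp (lam * (p.2 - t₂)) :=
      mul_pos hκ (Real.exp_pos _)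
    have hφp : φ p = C * ∑ i, (p.1 i - x i) ^ 2 + δ * (p.2 - t₁)
        + κ * Real.exp (lam * (p.2 - t₂)) := by rw [hφdef]
    have hCsq : C * ∑ i, (p.1 i - x i) ^ 2 ≤ B := by
      rw [hφp] at hφB; linarith
    have hexpB : κ * Real.exp (lam * (p.2 - t₂)) ≤ B := by
      have h1 : 0 ≤ C * ∑ i, (p.1 i - x i) ^ 2 := mul_nonneg hC.le hsq
      rw [hφp] at hφB; linarith
    -- spatial localization
    have hCval : C * η' ^ 2 = B + η' ^ 2 := by
      rw [hCdef]; field_simp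
    have hsqlt : ∑ i, (p.1 i - x i) ^ 2 < η' ^ 2 := by
      by_contra hcon
      push_neg at hcon
      have h1 := mul_le_mul_of_nonneg_left hcon hC.le
      have h2 : 0 < η' ^ 2 := by positivity
      rw [hCval] at h1
      linarith
    have hdist : dist p.1 x < η' := by
      rw [dist_pi_lt_iff hη']
      intro i
      have h1 : (p.1 i - x i) ^ 2 ≤ ∑ j, (p.1 j - x j) ^ 2 :=
        Finset.single_le_sum (f := fun j => (p.1 j - x j) ^ 2)
          (fun j _ => sq_nonneg _) (Finset.mem_univ i)
      have h2 : (p.1 i - x i) ^ 2 < η' ^ 2 := lt_of_le_of_lt h1 hsqlt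
      have := abs_lt_of_sq_lt_sq h2 hη'.le
      rwa [Real.dist_eq]
    -- temporal localization: p.2 < T
    have hsT : p.2 < T := by
      rcases lt_or_eq_of_le hp2.2 with h | h
      · exact h
      · exfalso
        have hlamT : lam * (T - t₂) = Real.log (B / κ + 1) + (T - t₂) := by
          rw [hlamdef]
          have : T - t₂ ≠ 0 := by linarith
          field_simp
        have hexp1 : B / κ + 1 ≤ Real.exp (lam * (T - t₂)) := by
          rw [hlamT]
          calc B / κ + 1 = Real.exp (Real.log (B / κ + 1)) := by
                rw [Real.exp_log (by linarith)]
            _ ≤ Real.exp (Real.log (B / κ + 1) + (T - t₂)) := by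
                apply Real.exp_le_exp.mpr; linarith
        have hκval : κ * (B / κ + 1) = B + κ := by field_simp
        have h3 : B + κ ≤ κ * Real.exp (lam * (T - t₂)) := by
          calc B + κ = κ * (B / κ + 1) := hκval.symm
            _ ≤ κ * Real.exp (lam * (T - t₂)) :=
                mul_le_mul_of_nonneg_left hexp1 hκ.le
        rw [← h] at h3
        linarith
    -- case split on whether p.2 = t₁
    rcases eq_or_lt_of_le hp2.1 with ht1 | ht1
    · -- maximum on the initial time slice: conclude directly
      have hpS : p ∈ S := hDS hpD
      have hpball : dist p (x, t₁) < η := by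
        rw [Prod.dist_eq]
        have h2 : dist p.2 t₁ = 0 := by rw [← ht1]; simp
        rw [h2]
        exact max_lt (lt_of_lt_of_le hdist hη'η) hηpos
      have hub : u p < u (x, t₁) + ε / 4 := hηsub ⟨Metric.mem_ball.mpr hpball, hpS⟩
      have hφnn : 0 ≤ φ p := by
        rw [hφp]
        have := mul_nonneg hC.le hsq
        linarith
      linarith
    · -- interior maximum: contradiction with the viscosity inequality
      exfalso
      have hpV : p.1 ∈ V := hrV (Metric.mem_closedBall.mpr (le_of_lt (lt_of_lt_of_le hdist hη'r)))
      have hpS : p ∈ S := ⟨hpV, ⟨lt_trans hat₁ ht1, lt_trans hsT hT2⟩⟩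
      have hmemD : D ∈ 𝓝 p := by
        rw [mem_nhds_iff]
        refine ⟨Metric.ball x r ×ˢ Set.Ioo t₁ T, ?_, ?_, ?_⟩
        · rw [hDdef]
          exact Set.prod_mono Metric.ball_subset_closedBall Set.Ioo_subset_Icc_self
        · exact Metric.isOpen_ball.prod isOpen_Ioo
        · exact ⟨Metric.mem_ball.mpr (lt_of_lt_of_le hdist hη'r), ⟨ht1, hsT⟩⟩
      have hloc : IsLocalMax (fun q => u q - φ q) p :=
        (isMaxOn_iff.mpr hpmax).isLocalMax hmemD
      have hvp := hvisc p hpS φ hφsmooth hloc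
      -- compute the time derivative of φ
      have hline : HasDerivAt (fun t : ℝ => ((p.1 : Fin N → ℝ), t)) (0, 1) p.2 :=
        (hasDerivAt_const p.2 p.1).prodMk (hasDerivAt_id p.2)
      have hd : HasFDerivAt φ (fderiv ℝ φ p) (p.1, p.2) := by
        rw [Prod.mk.eta]
        exact ((hφsmooth.differentiable (by simp)) p).hasFDerivAt
      have hcomp : HasDerivAt (fun t => φ (p.1, t)) (fderiv ℝ φ p (0, 1)) p.2 :=
        hd.comp_hasDerivAt p.2 hline
      have h1 : HasDerivAt (fun t : ℝ => δ * (t - t₁)) δ p.2 := by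
        simpa using ((hasDerivAt_id p.2).sub_const t₁).const_mul δ
      have h2 : HasDerivAt (fun t : ℝ => lam * (t - t₂)) lam p.2 := by
        simpa using ((hasDerivAt_id p.2).sub_const t₂).const_mul lam
      have h3 : HasDerivAt (fun t : ℝ => κ * Real.exp (lam * (t - t₂)))
          (κ * (Real.exp (lam * (p.2 - t₂)) * lam)) p.2 := (h2.exp).const_mul κ
      have h4 := ((hasDerivAt_const p.2 (C * ∑ i, (p.1 i - x i) ^ 2)).add h1).add h3
      have hexplicit : HasDerivAt (fun t => φ (p.1, t))
          (δ + κ * (Real.exp (lam * (p.2 - t₂)) * lam)) p.2 := by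
        simpa [hφdef, Pi.add_def] using h4
      have heq := hexplicit.unique hcomp
      have hpos : 0 < δ + κ * (Real.exp (lam * (p.2 - t₂)) * lam) := by
        have h5 : 0 < κ * (Real.exp (lam * (p.2 - t₂)) * lam) :=
          mul_pos hκ (mul_pos (Real.exp_pos _) hlam)
        linarith
      rw [heq] at hpos
      linarith
  by_contra hcon
  push_neg at hcon
  have := hmain ((u (x, t₂) - u (x, t₁)) / 2) (by linarith)
  linarith
end

section
/- Every plurisubharmonic function on an open set U ⊂ ℂⁿ, viewed as a time-independent function on U × (0,∞), is a viscosity subsolution of v_t = H(v). -/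
open Complex Topology Filter Metric Bornology

noncomputable section

/-- Wirtinger derivative `∂f/∂z_a` of a `ℂ`-valued function on `ℂⁿ`. -/
def wDz {n : ℕ} (f : (Fin n → ℂ) → ℂ) (z : Fin n → ℂ) (a : Fin n) : ℂ :=
  (1 / 2 : ℂ) * (fderiv ℝ f z (Pi.single a 1) - Complex.I * fderiv ℝ f z (Pi.single a Complex.I))

/-- Wirtinger derivative `∂f/∂z̄_a`. -/
def wDzbar {n : ℕ} (f : (Fin n → ℂ) → ℂ) (z : Fin n → ℂ) (a : Fin n) : ℂ :=
  (1 / 2 : ℂ) * (fderiv ℝ f z (Pi.single a 1) + Complex.I * fderiv ℝ f z (Pi.single a Complex.I))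

/-- `φ_α`, the first complex partial of a real function. -/
def pd {n : ℕ} (φ : (Fin n → ℂ) → ℝ) (z : Fin n → ℂ) (a : Fin n) : ℂ :=
  wDz (fun w => (φ w : ℂ)) z a

/-- `φ_{α β̄}`, the mixed complex second partial of a real function. -/
def pd2 {n : ℕ} (φ : (Fin n → ℂ) → ℝ) (z : Fin n → ℂ) (a b : Fin n) : ℂ :=
  wDz (fun w => wDzbar (fun w' => (φ w' : ℂ)) w b) z a

/-- `|∂φ|²`. -/
def gradSq {n : ℕ} (φ : (Fin n → ℂ) → ℝ) (z : Fin n → ℂ) : ℝ :=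
  ∑ a, Complex.normSq (pd φ z a)

/-- The (normalized) trace of the Levi form:
`H(φ) = Σ_{α,β} (δ^{αβ} − φ_α φ_β̄/|∂φ|²) φ_{αβ̄}`. -/
def leviTrace {n : ℕ} (φ : (Fin n → ℂ) → ℝ) (z : Fin n → ℂ) : ℝ :=
  (∑ a, ∑ b, ((if a = b then (1 : ℂ) else 0) -
      pd φ z a * (starRingEnd ℂ) (pd φ z b) / (gradSq φ z : ℂ)) * pd2 φ z a b).re

/-- `Σ_{α,β} (δ^{αβ} − η_α η_β̄) φ_{αβ̄}` for a fixed vector `η`. -/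
def etaForm {n : ℕ} (η : Fin n → ℂ) (φ : (Fin n → ℂ) → ℝ) (z : Fin n → ℂ) : ℝ :=
  (∑ a, ∑ b, ((if a = b then (1 : ℂ) else 0) - η a * (starRingEnd ℂ) (η b)) * pd2 φ z a b).re

/-- `φ_t`. -/
def timeDeriv {n : ℕ} (φ : (Fin n → ℂ) × ℝ → ℝ) (p : (Fin n → ℂ) × ℝ) : ℝ :=
  fderiv ℝ φ p (0, 1)

/-- The space slice `φ(·,t)`. -/
def spaceSlice {n : ℕ} (φ : (Fin n → ℂ) × ℝ → ℝ) (t : ℝ) : (Fin n → ℂ) → ℝ :=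
  fun z => φ (z, t)

/-- The spatial complex gradient of `φ(·,t)` vanishes at `p`. -/
def degenGrad {n : ℕ} (φ : (Fin n → ℂ) × ℝ → ℝ) (p : (Fin n → ℂ) × ℝ) : Prop :=
  ∀ a, pd (spaceSlice φ p.2) p.1 a = 0

/-- Viscosity (weak) subsolution of `v_t = H(v)` on `U`. -/
def IsSubsolution {n : ℕ} (U : Set ((Fin n → ℂ) × ℝ)) (v : (Fin n → ℂ) × ℝ → ℝ) : Prop :=
  UpperSemicontinuousOn v U ∧
  ∀ p ∈ U, ∀ φ : (Fin n → ℂ) × ℝ → ℝ, ContDiff ℝ (⊤ : ℕ∞) φ →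
    IsLocalMax (fun q => v q - φ q) p →
    ((¬ degenGrad φ p → timeDeriv φ p ≤ leviTrace (spaceSlice φ p.2) p.1) ∧
     (degenGrad φ p → ∃ η : Fin n → ℂ, (∑ a, Complex.normSq (η a)) ≤ 1 ∧
        timeDeriv φ p ≤ etaForm η (spaceSlice φ p.2) p.1))

/-- Viscosity (weak) supersolution of `v_t = H(v)` on `U`. -/
def IsSupersolution {n : ℕ} (U : Set ((Fin n → ℂ) × ℝ)) (v : (Fin n → ℂ) × ℝ → ℝ) : Prop :=
  LowerSemicontinuousOn v U ∧
  ∀ p ∈ U, ∀ φ : (Fin n → ℂ) × ℝ → ℝ, ContDiff ℝ (⊤ : ℕ∞) φ →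
    IsLocalMin (fun q => v q - φ q) p →
    ((¬ degenGrad φ p → leviTrace (spaceSlice φ p.2) p.1 ≤ timeDeriv φ p) ∧
     (degenGrad φ p → ∃ η : Fin n → ℂ, (∑ a, Complex.normSq (η a)) ≤ 1 ∧
        etaForm η (spaceSlice φ p.2) p.1 ≤ timeDeriv φ p))

/-- Plurisubharmonicity in the viscosity sense: `u` is upper semicontinuous and for every
smooth test function `φ` touching `u` from above, the complex Hessian of `φ` at the touching
point is positive semidefinite. -/
def IsPshViscosity {n : ℕ} (U : Set (Fin n → ℂ)) (u : (Fin n → ℂ) → ℝ) : Prop :=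
  UpperSemicontinuousOn u U ∧
  ∀ z ∈ U, ∀ φ : (Fin n → ℂ) → ℝ, ContDiff ℝ (⊤ : ℕ∞) φ →
    IsLocalMax (fun w => u w - φ w) z →
    ∀ ξ : Fin n → ℂ, 0 ≤ (∑ a, ∑ b, pd2 φ z a b * ξ a * (starRingEnd ℂ) (ξ b)).re

lemma key_sum {n : ℕ} (A : Fin n → Fin n → ℂ) (ξ : Fin n → ℂ) (g : ℂ)
    (hg : g = ∑ c, ξ c * (starRingEnd ℂ) (ξ c)) :
    ∑ c, ∑ a, ∑ b, A a b * ((if a = c then g else 0) - (starRingEnd ℂ) (ξ c) * ξ a)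
        * ((if b = c then g else 0) - ξ c * (starRingEnd ℂ) (ξ b))
      = g * g * (∑ a, A a a) - g * ∑ a, ∑ b, A a b * ξ a * (starRingEnd ℂ) (ξ b) := by
  rw [Finset.sum_comm]
  have h1 : ∀ a, ∑ c : Fin n, ∑ b, A a b * ((if a = c then g else 0) - (starRingEnd ℂ) (ξ c) * ξ a)
        * ((if b = c then g else 0) - ξ c * (starRingEnd ℂ) (ξ b))
      = ∑ b, A a b * ((if a = b then g * g else 0) - g * (ξ a * (starRingEnd ℂ) (ξ b))) := by
    intro a
    rw [Finset.sum_comm]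
    refine Finset.sum_congr rfl fun b _ => ?_
    have : ∑ c : Fin n, A a b * ((if a = c then g else 0) - (starRingEnd ℂ) (ξ c) * ξ a)
        * ((if b = c then g else 0) - ξ c * (starRingEnd ℂ) (ξ b))
        = A a b * ∑ c : Fin n, ((if a = c then g else 0) - (starRingEnd ℂ) (ξ c) * ξ a)
        * ((if b = c then g else 0) - ξ c * (starRingEnd ℂ) (ξ b)) := by
      rw [Finset.mul_sum]; exact Finset.sum_congr rfl fun c _ => (mul_assoc _ _ _)
    rw [this]
    congr 1
    have expand : ∀ c : Fin n, ((if a = c then g else 0) - (starRingEnd ℂ) (ξ c) * ξ a)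
        * ((if b = c then g else 0) - ξ c * (starRingEnd ℂ) (ξ b))
        = (if a = c then g else 0) * (if b = c then g else 0)
          - (if a = c then g else 0) * (ξ c * (starRingEnd ℂ) (ξ b))
          - ((if b = c then g else 0) * ((starRingEnd ℂ) (ξ c) * ξ a))
          + (ξ c * (starRingEnd ℂ) (ξ c)) * (ξ a * (starRingEnd ℂ) (ξ b)) := by
      intro c; ring
    simp only [expand, Finset.sum_add_distrib, Finset.sum_sub_distrib, ← Finset.sum_mul]
    rw [← hg]
    simp only [ite_mul, zero_mul, Finset.sum_ite_eq, Finset.mem_univ, if_true]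
    by_cases hab : a = b
    · subst hab; simp; ring
    · rw [if_neg hab, if_neg (fun h : b = a => hab (Eq.symm h))]; ring
  rw [Finset.sum_congr rfl (fun a _ => h1 a)]
  simp only [mul_sub, Finset.sum_sub_distrib, mul_ite, mul_zero, Finset.sum_ite_eq,
    Finset.mem_univ, if_true, ← Finset.mul_sum]
  congr 1
  · rw [Finset.mul_sum]; exact Finset.sum_congr rfl fun a _ => mul_comm _ _
  · rw [Finset.mul_sum]; exact Finset.sum_congr rfl fun a _ => by
      rw [Finset.mul_sum]; exact Finset.sum_congr rfl fun b _ => by ring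

lemma single_quad {n : ℕ} (A : Fin n → Fin n → ℂ) (a : Fin n) :
    ∑ b, ∑ c, A b c * (Pi.single a 1 : Fin n → ℂ) b * (starRingEnd ℂ) ((Pi.single a 1 : Fin n → ℂ) c)
      = A a a := by
  have h : ∀ b, (Pi.single a 1 : Fin n → ℂ) b = if b = a then 1 else 0 :=
    fun b => Pi.single_apply a 1 b
  simp only [h, apply_ite (starRingEnd ℂ), map_one, map_zero, mul_ite, mul_one, mul_zero,
    ite_mul, zero_mul]
  simp [Finset.sum_ite_eq']

/-- Every plurisubharmonic function on an open set `U ⊂ ℂⁿ`, viewed as a time-independent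
function on `U × (0,∞)`, is a viscosity subsolution of `v_t = H(v)`. -/
theorem psh_isSubsolution {n : ℕ}
    (U : Set (Fin n → ℂ)) (hU : IsOpen U)
    (u : (Fin n → ℂ) → ℝ) (hu : IsPshViscosity U u) :
    IsSubsolution (U ×ˢ Set.Ioi (0 : ℝ)) (fun p => u p.1) := by
  obtain ⟨husc, hquad⟩ := hu
  constructor
  · intro p hp y hy
    exact ((continuous_fst.continuousWithinAt).tendsto_nhdsWithin
      (fun q hq => hq.1)).eventually (husc p.1 hp.1 y hy)
  · intro p hp φ hφ hmax
    set ψ : (Fin n → ℂ) → ℝ := spaceSlice φ p.2 with hψdef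
    have hψc : ContDiff ℝ (⊤ : ℕ∞) ψ := hφ.comp (contDiff_id.prodMk contDiff_const)
    have hmax' : IsLocalMax (fun w => u w - ψ w) p.1 := by
      have hcont : ContinuousAt (fun w : Fin n → ℂ => (w, p.2)) p.1 :=
        (continuous_id.prodMk continuous_const).continuousAt
      have h := hcont.tendsto.eventually hmax
      simpa [IsLocalMax, IsMaxFilter, hψdef, spaceSlice] using h
    have hQ := hquad p.1 hp.1 ψ hψc hmax'
    -- time derivative is zero
    have ht0 : timeDeriv φ p = 0 := by
      have hj : HasDerivAt (fun s : ℝ => ((p.1 : Fin n → ℂ), s)) ((0 : Fin n → ℂ), (1:ℝ)) p.2 :=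
        (hasDerivAt_const _ _).prodMk (hasDerivAt_id _)
      have hF : HasFDerivAt φ (fderiv ℝ φ p) ((p.1, p.2) : (Fin n → ℂ) × ℝ) := by
        rw [Prod.mk.eta]
        exact ((hφ.differentiable (by simp)) p).hasFDerivAt
      have hd : HasDerivAt (fun s : ℝ => φ (p.1, s)) (fderiv ℝ φ p (0, 1)) p.2 :=
        hF.comp_hasDerivAt p.2 hj
      have hmin : IsLocalMin (fun s : ℝ => φ (p.1, s)) p.2 := by
        have hcont : ContinuousAt (fun s : ℝ => ((p.1 : Fin n → ℂ), s)) p.2 :=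
          (continuous_const.prodMk continuous_id).continuousAt
        have h := hcont.tendsto.eventually hmax
        simp only [Prod.mk.eta] at h
        filter_upwards [h] with s hs
        have : u p.1 - φ (p.1, s) ≤ u p.1 - φ p := by simpa using hs
        simpa [Prod.mk.eta] using by linarith
      exact hmin.hasDerivAt_eq_zero hd
    rw [ht0]
    constructor
    · -- nondegenerate case
      intro hnd
      set ξ : Fin n → ℂ := pd ψ p.1 with hξdef
      set A : Fin n → Fin n → ℂ := pd2 ψ p.1 with hAdef
      set g : ℝ := gradSq ψ p.1 with hgdef
      have hgpos : 0 < g := by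
        rcases not_forall.mp hnd with ⟨a, ha⟩
        have h1 : 0 < Complex.normSq (ξ a) := by
          simpa [Complex.normSq_pos] using ha
        have h2 : ∀ b, 0 ≤ Complex.normSq (ξ b) := fun b => Complex.normSq_nonneg _
        exact lt_of_lt_of_le h1 (Finset.single_le_sum (fun b _ => h2 b) (Finset.mem_univ a))
      have hgc : (g : ℂ) = ∑ c, ξ c * (starRingEnd ℂ) (ξ c) := by
        rw [hgdef]
        push_cast [gradSq]
        exact Finset.sum_congr rfl fun c _ => (Complex.mul_conj _).symm
      -- positivity of the sum of quadratic forms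
      have hpos : 0 ≤ (g * g * (∑ a, A a a) -
          g * ∑ a, ∑ b, A a b * ξ a * (starRingEnd ℂ) (ξ b) : ℂ).re := by
        rw [← key_sum A ξ (g : ℂ) hgc, Complex.re_sum]
        apply Finset.sum_nonneg
        intro c _
        have := hQ (fun a => (if a = c then (g : ℂ) else 0) - (starRingEnd ℂ) (ξ c) * ξ a)
        have hconj : ∀ b, (starRingEnd ℂ)
            ((if b = c then (g : ℂ) else 0) - (starRingEnd ℂ) (ξ c) * ξ b)
            = (if b = c then (g : ℂ) else 0) - ξ c * (starRingEnd ℂ) (ξ b) := by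
          intro b
          simp [apply_ite (starRingEnd ℂ), map_sub, map_mul, Complex.conj_ofReal, mul_comm]
        calc (0:ℝ) ≤ _ := this
          _ = _ := by
            congr 1
            refine Finset.sum_congr rfl fun a _ => Finset.sum_congr rfl fun b _ => ?_
            rw [hconj b]
      set S : ℂ := ∑ a, ∑ b, A a b * ξ a * (starRingEnd ℂ) (ξ b) with hSdef
      set T : ℂ := ∑ a, A a a with hTdef
      have hpos' : g * S.re ≤ g * g * T.re := by
        have : (g * g * T - g * S : ℂ).re = g * g * T.re - g * S.re := by
          simp [Complex.sub_re, Complex.mul_re, Complex.ofReal_re, Complex.ofReal_im]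
        rw [show ((g:ℂ) * g * T - g * S) = ((g*g : ℝ) : ℂ) * T - ((g:ℝ):ℂ) * S by push_cast; ring]
          at hpos
        simp only [Complex.sub_re, Complex.re_ofReal_mul] at hpos
        linarith
      -- compute leviTrace
      have hlt : leviTrace ψ p.1 = T.re - S.re / g := by
        have hsplit : (∑ a, ∑ b, ((if a = b then (1 : ℂ) else 0) -
            ξ a * (starRingEnd ℂ) (ξ b) / (g : ℂ)) * A a b)
            = T - S * ((g : ℂ))⁻¹ := by
          rw [hTdef, hSdef, Finset.sum_mul, ← Finset.sum_sub_distrib]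
          refine Finset.sum_congr rfl fun a _ => ?_
          rw [Finset.sum_mul]
          have hterm : ∀ b, ((if a = b then (1 : ℂ) else 0) -
              ξ a * (starRingEnd ℂ) (ξ b) / (g : ℂ)) * A a b
              = (if a = b then A a b else 0) - A a b * ξ a * (starRingEnd ℂ) (ξ b) * ((g:ℂ))⁻¹ := by
            intro b
            by_cases hab : a = b <;> simp [hab, div_eq_mul_inv] <;> ring
          rw [Finset.sum_congr rfl fun b _ => hterm b, Finset.sum_sub_distrib]
          congr 1
          simp
        rw [leviTrace, hsplit, ← div_eq_mul_inv, Complex.sub_re, Complex.div_ofReal_re]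
      rw [hlt]
      rw [sub_nonneg, div_le_iff₀ hgpos]
      nlinarith [hpos', hgpos]
    · -- degenerate case
      intro _
      refine ⟨0, by simp, ?_⟩
      have : etaForm 0 ψ p.1 = ∑ a, (pd2 ψ p.1 a a).re := by
        rw [etaForm, ← Complex.re_sum]
        congr 1
        rw [show (∑ a, (pd2 ψ p.1 a a)) = ∑ a, ∑ b, (if a = b then (1:ℂ) else 0) * pd2 ψ p.1 a b
          from Finset.sum_congr rfl fun a _ => by simp [Finset.sum_ite_eq, Finset.mem_univ]]
        refine Finset.sum_congr rfl fun a _ => Finset.sum_congr rfl fun b _ => ?_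
        simp
      rw [this]
      apply Finset.sum_nonneg
      intro a _
      have := hQ (Pi.single a 1)
      rwa [single_quad] at this
end
end
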